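/- arXiv:0804.2331 — 2 statements merged into one kernel-verified Lean document; each statement's English description precedes it below -/
import Mathlib

section
/- Let S₁ = {α₁,…,α_s} and S₂ = {α_{s+1},…,α_n} be orthonormal sets of unit vectors in ℝⁿ whose union is linearly independent, with reflections R_i = R(α_i), c₊ = R₁⋯R_s, c₋ = R_{s+1}⋯R_n and c = c₊c₋. Then for every integer k, c₊(cᵏ(v)) = -c^{-k}(v) for all v ∈ span S₁, i.e., c₊ ∘ cᵏ = -c^{-k} on the span of S₁. -/
open scoped RealInnerProductSpace

section aux
variable {E : Type*} [NormedAddCommGroup E] [InnerProductSpace ℝ E]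

lemma refl_prod_apply {m : ℕ} (β : Fin m → E)
    (horth : ∀ i j, ⟪β i, β j⟫ = if i = j then 1 else 0)
    (T : Fin m → (E ≃ₗᵢ[ℝ] E))
    (hT : ∀ i x, T i x = x - (2 * ⟪x, β i⟫) • β i) (x : E) :
    (List.ofFn T).prod x = x - ∑ i, (2 * ⟪x, β i⟫) • β i := by
  induction m with
  | zero => simp
  | succ m ih =>
    rw [List.ofFn_succ, List.prod_cons]
    have hrest := ih (fun i => β i.succ)
      (fun i j => by rw [horth]; simp [Fin.succ_inj])
      (fun i => T i.succ) (fun i x => hT i.succ x)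
    have happ : (T 0 * (List.ofFn fun i : Fin m => T i.succ).prod) x
        = T 0 ((List.ofFn fun i : Fin m => T i.succ).prod x) := rfl
    rw [happ, hrest, hT 0]
    have hin : ⟪x - ∑ i : Fin m, (2 * ⟪x, β i.succ⟫) • β i.succ, β 0⟫ = ⟪x, β 0⟫ := by
      rw [inner_sub_left, sum_inner]
      have h0 : ∀ i : Fin m, ⟪(2 * ⟪x, β i.succ⟫) • β i.succ, β 0⟫ = 0 := by
        intro i
        rw [real_inner_smul_left, horth]
        simp [Fin.succ_ne_zero]
      rw [Finset.sum_congr rfl fun i _ => h0 i]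
      simp
    rw [hin, Fin.sum_univ_succ]
    abel

lemma refl_prod_invol {m : ℕ} (β : Fin m → E)
    (horth : ∀ i j, ⟪β i, β j⟫ = if i = j then 1 else 0)
    (T : Fin m → (E ≃ₗᵢ[ℝ] E))
    (hT : ∀ i x, T i x = x - (2 * ⟪x, β i⟫) • β i) :
    (List.ofFn T).prod * (List.ofFn T).prod = 1 := by
  ext x
  have h1 := refl_prod_apply β horth T hT x
  have key : ∀ j : Fin m, ⟪(List.ofFn T).prod x, β j⟫ = -⟪x, β j⟫ := by
    intro j
    rw [h1, inner_sub_left, sum_inner]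
    have h0 : ∀ i : Fin m, ⟪(2 * ⟪x, β i⟫) • β i, β j⟫
        = if i = j then 2 * ⟪x, β j⟫ else 0 := by
      intro i
      rw [real_inner_smul_left, horth]
      split <;> simp_all
    rw [Finset.sum_congr rfl fun i _ => h0 i, Finset.sum_ite_eq' Finset.univ j]
    simp
    ring
  have h2 := refl_prod_apply β horth T hT ((List.ofFn T).prod x)
  have happ : ((List.ofFn T).prod * (List.ofFn T).prod) x
      = (List.ofFn T).prod ((List.ofFn T).prod x) := rfl
  rw [happ, h2, Finset.sum_congr rfl (fun j _ => by rw [key j]), h1]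
  simp only [LinearIsometryEquiv.coe_one, id_eq]
  have hneg : ∀ j : Fin m, (2 * -⟪x, β j⟫) • β j = -((2 * ⟪x, β j⟫) • β j) := by
    intro j; rw [← neg_smul]; congr 1; ring
  rw [Finset.sum_congr rfl fun j _ => hneg j, Finset.sum_neg_distrib]
  abel

end aux

/-- Let `S₁ = {α₁,…,α_s}` and `S₂ = {α_{s+1},…,α_n}` be orthonormal sets of unit
vectors in `ℝⁿ` whose union is linearly independent, with reflections
`R_i = R(α_i)`, `c₊ = R₁⋯R_s`, `c₋ = R_{s+1}⋯R_n` and `c = c₊ c₋`.  Then for every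
integer `k`, `c₊(cᵏ(v)) = -c^{-k}(v)` for all `v` in the span of `S₁`. -/
theorem stmt_1 {n s : ℕ} (hs : s ≤ n) (α : Fin n → EuclideanSpace ℝ (Fin n))
    (horth₁ : ∀ i j : Fin n, i.val < s → j.val < s →
      ⟪α i, α j⟫ = if i = j then 1 else 0)
    (horth₂ : ∀ i j : Fin n, s ≤ i.val → s ≤ j.val →
      ⟪α i, α j⟫ = if i = j then 1 else 0)
    (hind : LinearIndependent ℝ α)
    (R : Fin n → (EuclideanSpace ℝ (Fin n) ≃ₗᵢ[ℝ] EuclideanSpace ℝ (Fin n)))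
    (hR : ∀ i x, R i x = x - (2 * ⟪x, α i⟫) • α i)
    (cp cm c : EuclideanSpace ℝ (Fin n) ≃ₗᵢ[ℝ] EuclideanSpace ℝ (Fin n))
    (hcp : cp = (List.ofFn fun i : Fin s => R (Fin.castLE hs i)).prod)
    (hcm : cm = (List.ofFn fun i : Fin (n - s) =>
      R ⟨s + i.val, by have := i.isLt; omega⟩).prod)
    (hc : c = cp * cm) :
    ∀ (k : ℤ) (v : EuclideanSpace ℝ (Fin n)),
      v ∈ Submodule.span ℝ {x | ∃ i : Fin n, i.val < s ∧ x = α i} →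
        cp ((c ^ k) v) = -((c ^ (-k)) v) := by
  have ho1 : ∀ i j : Fin s, ⟪α (Fin.castLE hs i), α (Fin.castLE hs j)⟫
      = if i = j then 1 else 0 := by
    intro i j
    rw [horth₁ _ _ (by simpa using i.isLt) (by simpa using j.isLt)]
    simp [Fin.castLE_inj]
  have ho2 : ∀ i j : Fin (n - s),
      ⟪α ⟨s + i.val, by have := i.isLt; omega⟩, α ⟨s + j.val, by have := j.isLt; omega⟩⟫
      = if i = j then 1 else 0 := by
    intro i j
    rw [horth₂ _ _ (by simp) (by simp)]
    by_cases h : i = j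
    · subst h; simp
    · rw [if_neg h, if_neg]
      intro hh
      have h2 := congrArg Fin.val hh
      simp only [] at h2
      exact h (Fin.ext (by omega))
  have hcp_apply : ∀ x, cp x = x - ∑ i : Fin s,
      (2 * ⟪x, α (Fin.castLE hs i)⟫) • α (Fin.castLE hs i) := by
    intro x
    rw [hcp]
    exact refl_prod_apply _ ho1 _ (fun i x => hR _ x) x
  have hcp2 : cp * cp = 1 := by
    rw [hcp]
    exact refl_prod_invol _ ho1 _ (fun i x => hR _ x)
  have hcm2 : cm * cm = 1 := by
    rw [hcm]
    exact refl_prod_invol _ ho2 _ (fun i x => hR _ x)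
  have hcpinv : cp⁻¹ = cp := inv_eq_of_mul_eq_one_right hcp2
  have hcminv : cm⁻¹ = cm := inv_eq_of_mul_eq_one_right hcm2
  have hcinv : c⁻¹ = cm * cp := by
    rw [hc, mul_inv_rev, hcpinv, hcminv]
  -- cp acts as -1 on the span
  have hneg : ∀ v ∈ Submodule.span ℝ {x | ∃ i : Fin n, i.val < s ∧ x = α i},
      cp v = -v := by
    intro v hv
    have hker : v ∈ LinearMap.ker
        ((cp.toLinearEquiv : EuclideanSpace ℝ (Fin n) →ₗ[ℝ] EuclideanSpace ℝ (Fin n))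
          + LinearMap.id) := by
      refine Submodule.span_le.2 ?_ hv
      rintro x ⟨i, hi, rfl⟩
      have hi' : Fin.castLE hs (⟨i.val, hi⟩ : Fin s) = i := by
        apply Fin.ext; simp
      have hsum : ∑ j : Fin s, (2 * ⟪α i, α (Fin.castLE hs j)⟫) • α (Fin.castLE hs j)
          = (2 : ℝ) • α i := by
        have h0 : ∀ j : Fin s, (2 * ⟪α i, α (Fin.castLE hs j)⟫) • α (Fin.castLE hs j)
            = if j = (⟨i.val, hi⟩ : Fin s) then (2:ℝ) • α i else 0 := by
          intro j
          rw [horth₁ _ _ hi (by simpa using j.isLt)]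
          by_cases h : j = (⟨i.val, hi⟩ : Fin s)
          · subst h
            rw [if_pos rfl, if_pos (hi'.symm), hi']
            norm_num
          · rw [if_neg h, if_neg]
            · simp
            · intro hh
              apply h
              apply Fin.ext
              have : i.val = (Fin.castLE hs j).val := by rw [hh]
              simpa using this.symm
        rw [Finset.sum_congr rfl fun j _ => h0 j, Finset.sum_ite_eq' Finset.univ]
        simp
      have hcpv : cp (α i) = -α i := by
        rw [hcp_apply (α i), hsum, two_smul]
        abel
      simp only [SetLike.mem_coe, LinearMap.mem_ker, LinearMap.add_apply, LinearMap.id_apply,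
        LinearEquiv.coe_coe, LinearIsometryEquiv.coe_toLinearEquiv]
      rw [hcpv]
      abel
    simp only [LinearMap.mem_ker, LinearMap.add_apply, LinearMap.id_apply,
      LinearEquiv.coe_coe, LinearIsometryEquiv.coe_toLinearEquiv] at hker
    exact eq_neg_of_add_eq_zero_left hker
  -- conjugation identity
  have hconj : ∀ k : ℤ, cp * c ^ k = c ^ (-k) * cp := by
    intro k
    have h1 : cp * c * cp⁻¹ = c⁻¹ := by
      rw [hcinv, hc, hcpinv, ← mul_assoc, hcp2, one_mul]
    have h2 : cp * c ^ k * cp⁻¹ = (c⁻¹) ^ k := by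
      have := map_zpow (MulAut.conj cp) c k
      simp only [MulAut.conj_apply] at this
      rw [this, h1]
    have h3 : (c⁻¹) ^ k = c ^ (-k) := by
      rw [inv_zpow, zpow_neg]
    calc cp * c ^ k = (cp * c ^ k * cp⁻¹) * cp := by group
      _ = c ^ (-k) * cp := by rw [h2, h3]
  intro k v hv
  have e1 : cp ((c ^ k) v) = (cp * c ^ k) v := rfl
  have e2 : (c ^ (-k) * cp) v = (c ^ (-k)) (cp v) := rfl
  rw [e1, hconj k, e2, hneg v hv, map_neg]
end

section
/- Let c be an orthogonal transformation of ℝⁿ with I − c invertible, μ = 2(I−c)⁻¹, and τ a unit vector. Then μ(τ) is fixed by the composite R(τ)∘c, where R(τ) is the reflection in the hyperplane τ^⊥. -/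
/- Since `(I - c) μ = 2`, the vector `c (μ τ)` is `μ τ - 2τ`; as `c` preserves norms, `μ τ` is
equidistant from `0` and `2τ`, i.e. `⟪μ τ, τ⟫ = ‖τ‖² = 1`. The reflection therefore sends
`μ τ - 2τ` to `μ τ - 2τ - 2(1 - 2)τ = μ τ`. -/

open scoped RealInnerProductSpace

noncomputable section

/-- The reflection in the hyperplane `τ^⊥`:  `R(τ)(x) = x - 2(x·τ)τ`. -/
def reflect {n : ℕ} (τ x : EuclideanSpace ℝ (Fin n)) : EuclideanSpace ℝ (Fin n) :=
  x - (2 * ⟪x, τ⟫) • τ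

theorem two_mul_inner_eq_of_norm_sub_eq {E : Type*} [NormedAddCommGroup E]
    [InnerProductSpace ℝ E] {v w : E} (h : ‖v - w‖ = ‖v‖) : 2 * ⟪v, w⟫ = ‖w‖ ^ 2 := by
  have := congrArg (· ^ 2) h
  simp only [norm_sub_sq_real] at this
  linarith

theorem inner_eq_one_of_norm_sub_two_smul_eq {E : Type*} [NormedAddCommGroup E]
    [InnerProductSpace ℝ E] {v τ : E} (hτ : ‖τ‖ = 1) (h : ‖v - (2 : ℝ) • τ‖ = ‖v‖) :
    ⟪v, τ⟫ = 1 := by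
  have := two_mul_inner_eq_of_norm_sub_eq h
  rw [real_inner_smul_right, norm_smul, hτ] at this
  norm_num at this
  linarith

theorem reflect_sub_two_smul {n : ℕ} {v τ : EuclideanSpace ℝ (Fin n)} (hτ : ‖τ‖ = 1)
    (hv : ⟪v, τ⟫ = 1) : reflect τ (v - (2 : ℝ) • τ) = v := by
  have hττ : ⟪τ, τ⟫ = 1 := by rw [real_inner_self_eq_norm_sq, hτ, one_pow]
  rw [reflect, inner_sub_left, real_inner_smul_left, hv, hττ]
  module

theorem stmt_4_general {n : ℕ} (c : EuclideanSpace ℝ (Fin n) ≃ₗᵢ[ℝ] EuclideanSpace ℝ (Fin n))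
    (μ : EuclideanSpace ℝ (Fin n) →ₗ[ℝ] EuclideanSpace ℝ (Fin n))
    (hμ₁ : ∀ x, μ x - c (μ x) = (2 : ℝ) • x)
    (τ : EuclideanSpace ℝ (Fin n)) (hτ : ‖τ‖ = 1) :
    reflect τ (c (μ τ)) = μ τ := by
  have hc : c (μ τ) = μ τ - (2 : ℝ) • τ := by rw [← hμ₁ τ, sub_sub_cancel]
  have hinner : ⟪μ τ, τ⟫ = 1 :=
    inner_eq_one_of_norm_sub_two_smul_eq hτ (by rw [← hc, c.norm_map])
  rw [hc, reflect_sub_two_smul hτ hinner]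

/-- Let `c` be an orthogonal transformation of `ℝⁿ` with `I - c` invertible,
`μ = 2 (I - c)⁻¹`, and `τ` a unit vector.  Then `μ(τ)` is fixed by `R(τ) ∘ c`,
where `R(τ)` is the reflection in the hyperplane `τ^⊥`. -/
theorem stmt_4 {n : ℕ} (c : EuclideanSpace ℝ (Fin n) ≃ₗᵢ[ℝ] EuclideanSpace ℝ (Fin n))
    (μ : EuclideanSpace ℝ (Fin n) →ₗ[ℝ] EuclideanSpace ℝ (Fin n))
    (hμ₁ : ∀ x, μ x - c (μ x) = (2 : ℝ) • x)
    (hμ₂ : ∀ x, μ (x - c x) = (2 : ℝ) • x)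
    (τ : EuclideanSpace ℝ (Fin n)) (hτ : ‖τ‖ = 1) :
    reflect τ (c (μ τ)) = μ τ :=
  stmt_4_general c μ hμ₁ τ hτ
end
end
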